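/- Let Ω ⊂ ℝ^(2n+1−k) be open, φ : Ω → ℝ^k continuous, and a ∈ Ω. Suppose there exist C > 0 and r > 0 such that |φ(m) − φ(a)| ≤ C·d_φ(m,a) for every m ∈ Ω with d_∞(i(m), i(a)) < r. Let ℓ ∈ {1,…,k} and let γ : [−δ,δ] → Ω be an integral curve of ∇^{φ_ℓ} = ∂_{η_ℓ} + φ_ℓ·∂_τ with γ(0) = a, where δ > 0 is small enough that the above bound applies at m = γ(s) for all s ∈ [−δ,δ]. Then d_φ(γ(s), a) ≤ max{1, C}·|s| for all s ∈ [−δ,δ]. -/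

import Mathlib

open scoped BigOperators
open MeasureTheory Filter Topology

noncomputable section

namespace HeisGraph

/-! ### Points of the Heisenberg group ℍⁿ, identified with ℝ^{2n+1} -/

/-- Index type for the coordinates of a point of ℍⁿ: `x`-coordinates, `y`-coordinates
and the vertical coordinate `t`. -/
abbrev HIdxT (n : ℕ) := Sum (Fin n) (Sum (Fin n) Unit)

/-- ℍⁿ as a Euclidean space (so that the Euclidean norm is available). -/
abbrev HP (n : ℕ) := EuclideanSpace ℝ (HIdxT n)

variable {n k : ℕ}

def xPart (p : HP n) (i : Fin n) : ℝ := p (Sum.inl i)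
def yPart (p : HP n) (i : Fin n) : ℝ := p (Sum.inr (Sum.inl i))
def tPart (p : HP n) : ℝ := p (Sum.inr (Sum.inr ()))

def mkH (x y : Fin n → ℝ) (t : ℝ) : HP n :=
  WithLp.toLp 2 (fun i => Sum.elim x (Sum.elim y (fun _ => t)) i)

/-- The Heisenberg group product on ℝ^{2n+1}. -/
def hMul (p q : HP n) : HP n :=
  mkH (fun i => xPart p i + xPart q i) (fun i => yPart p i + yPart q i)
    (tPart p + tPart q + (1 / 2) * ∑ i : Fin n, (xPart p i * yPart q i - xPart q i * yPart p i))

/-- The Heisenberg group inverse: `p⁻¹ = -p`. -/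
def hInv (p : HP n) : HP n := -p

/-- The intrinsic dilations of ℍⁿ. -/
def dilH (lam : ℝ) (p : HP n) : HP n :=
  mkH (fun i => lam * xPart p i) (fun i => lam * yPart p i) (lam ^ 2 * tPart p)

/-- The homogeneous norm `‖p‖_∞ = max { |(x,y)| , |t|^{1/2} }`. -/
def normH (p : HP n) : ℝ :=
  max (Real.sqrt (∑ i, xPart p i ^ 2 + ∑ i, yPart p i ^ 2)) (Real.sqrt |tPart p|)

/-- The homogeneous distance `d_∞(p,q) = ‖q⁻¹ · p‖_∞`. -/
def dInf (p q : HP n) : ℝ := normH (hMul (hInv q) p)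

/-! ### Points of 𝕄 ≅ ℝ^{2n+1-k}: coordinates (v_{k+1..n}, η_{1..k}, w_{k+1..n}, τ) -/

abbrev MIdxT (n k : ℕ) := Sum (Fin (n - k)) (Sum (Fin k) (Sum (Fin (n - k)) Unit))

abbrev MP (n k : ℕ) := EuclideanSpace ℝ (MIdxT n k)

def vPart (a : MP n k) (j : Fin (n - k)) : ℝ := a (Sum.inl j)
def etaPart (a : MP n k) (i : Fin k) : ℝ := a (Sum.inr (Sum.inl i))
def wPart (a : MP n k) (j : Fin (n - k)) : ℝ := a (Sum.inr (Sum.inr (Sum.inl j)))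
def tauPart (a : MP n k) : ℝ := a (Sum.inr (Sum.inr (Sum.inr ())))

def mkM (v : Fin (n - k) → ℝ) (η : Fin k → ℝ) (w : Fin (n - k) → ℝ) (τ : ℝ) : MP n k :=
  WithLp.toLp 2 (fun i => Sum.elim v (Sum.elim η (Sum.elim w (fun _ => τ))) i)

/-- The embedding `i : ℝ^{2n+1-k} → ℍⁿ` onto the subgroup 𝕄 (`k` zeros among the
`x`-coordinates first). -/
def iota (a : MP n k) : HP n :=
  mkH (fun i => if h : (i : ℕ) < k then 0 else vPart a ⟨(i : ℕ) - k, by have := i.isLt; omega⟩)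
    (fun i => if h : (i : ℕ) < k then etaPart a ⟨(i : ℕ), h⟩
      else wPart a ⟨(i : ℕ) - k, by have := i.isLt; omega⟩)
    (tauPart a)

/-- The embedding `j : ℝ^k → ℍⁿ` onto the horizontal subgroup ℍ. -/
def jmap (h : EuclideanSpace ℝ (Fin k)) : HP n :=
  mkH (fun i => if hi : (i : ℕ) < k then h ⟨(i : ℕ), hi⟩ else 0) (fun _ => 0) 0

/-- The projection `π_𝕄 : ℍⁿ → 𝕄` determined by the unique factorization `p = m·h`,
`m ∈ 𝕄`, `h ∈ ℍ` (written in the coordinates of `MP n k`). -/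
def piM (hk : k ≤ n) (p : HP n) : MP n k :=
  mkM (fun j => xPart p ⟨(j : ℕ) + k, by have := j.isLt; omega⟩)
    (fun i => yPart p ⟨(i : ℕ), lt_of_lt_of_le i.isLt hk⟩)
    (fun j => yPart p ⟨(j : ℕ) + k, by have := j.isLt; omega⟩)
    (tPart p + (1 / 2) * ∑ i : Fin k,
      xPart p ⟨(i : ℕ), lt_of_lt_of_le i.isLt hk⟩ * yPart p ⟨(i : ℕ), lt_of_lt_of_le i.isLt hk⟩)

/-- The unit vertical vector of `MP n k`. -/
def tauUnit : MP n k := mkM 0 0 0 1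

/-- The product `⋆` induced on ℝ^{2n+1-k} by the group structure of 𝕄. -/
def starMul (a b : MP n k) : MP n k :=
  a + b + ((1 / 2) * ∑ j : Fin (n - k), (vPart a j * wPart b j - vPart b j * wPart a j)) • tauUnit

/-- The dilations `δ_λ^⋆` induced on ℝ^{2n+1-k}. -/
def dilStar (lam : ℝ) (a : MP n k) : MP n k :=
  mkM (fun j => lam * vPart a j) (fun i => lam * etaPart a i) (fun j => lam * wPart a j)
    (lam ^ 2 * tauPart a)

/-- The homogeneous norm of 𝕄 read on `MP n k` (it equals `normH (iota a)`). -/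
def normM (a : MP n k) : ℝ :=
  max (Real.sqrt (∑ j, vPart a j ^ 2 + ∑ i, etaPart a i ^ 2 + ∑ j, wPart a j ^ 2))
    (Real.sqrt |tauPart a|)

/-- The graph map `Φ(a) = i(a) · j(φ(a))`. -/
def graphMap (φ : MP n k → EuclideanSpace ℝ (Fin k)) (a : MP n k) : HP n :=
  hMul (iota a) (jmap (φ a))

/-- The graph distance `d_φ(a,b) = ‖π_𝕄(Φ(b)⁻¹ · Φ(a))‖_∞`. -/
def dPhi (hk : k ≤ n) (φ : MP n k → EuclideanSpace ℝ (Fin k)) (a b : MP n k) : ℝ :=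
  normM (piM hk (hMul (hInv (graphMap φ b)) (graphMap φ a)))

/-- `L : ℝ^{2n+1-k} → ℝ^k` is ⋆-linear: a homomorphism for `⋆`, homogeneous of degree 1
for the dilations `δ_λ^⋆`. -/
def IsStarLinear (L : MP n k → EuclideanSpace ℝ (Fin k)) : Prop :=
  (∀ a b, L (starMul a b) = L a + L b) ∧ ∀ lam > (0 : ℝ), ∀ a, L (dilStar lam a) = lam • L a

/-! ### Horizontal coordinates, matrices, cubes -/

/-- Index type for the `2n-k` horizontal coordinates of `MP n k` (τ deleted). -/
abbrev HorIdx (n k : ℕ) := Sum (Fin (n - k)) (Sum (Fin k) (Fin (n - k)))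

/-- The projection `π` deleting the vertical coordinate τ. -/
def piHor (a : MP n k) : HorIdx n k → ℝ :=
  Sum.elim (fun j => vPart a j) (Sum.elim (fun i => etaPart a i) (fun j => wPart a j))

/-- The ⋆-linear map associated to a `k × (2n-k)` matrix: `L(a) = M · π(a)`. -/
def ofMatrix (M : Matrix (Fin k) (HorIdx n k) ℝ) (a : MP n k) : EuclideanSpace ℝ (Fin k) :=
  WithLp.toLp 2 (fun i => M.mulVec (piHor a) i)

/-- The open coordinate cube `I_r(a)`. -/
def cube (r : ℝ) (a : MP n k) : Set (MP n k) := {p | ∀ i, |p i - a i| < r}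

/-- The closed coordinate cube `cl(I_r(a))`. -/
def closedCube (r : ℝ) (a : MP n k) : Set (MP n k) := {p | ∀ i, |p i - a i| ≤ r}

/-! ### Intrinsic differentiability -/

/-- The quantitative condition expressing uniform intrinsic differentiability of `φ`
at `a₀` (relative to `Ω`) with intrinsic differential `L`:
`lim_{r→0} sup_{a,b ∈ I_r(a₀)∩Ω} |φ(b) - φ(a) - L(a⁻¹ ⋆ b)| / d_φ(b,a) = 0`. -/
def UIDcond (hk : k ≤ n) (Ω : Set (MP n k)) (φ : MP n k → EuclideanSpace ℝ (Fin k))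
    (a₀ : MP n k) (L : MP n k → EuclideanSpace ℝ (Fin k)) : Prop :=
  ∀ ε > (0 : ℝ), ∃ r > (0 : ℝ), ∀ a ∈ cube r a₀ ∩ Ω, ∀ b ∈ cube r a₀ ∩ Ω,
    ‖φ b - φ a - L (starMul (-a) b)‖ ≤ ε * dPhi hk φ b a

/-- `φ` is uniformly intrinsic differentiable at `a₀`. -/
def UIDAt (hk : k ≤ n) (Ω : Set (MP n k)) (φ : MP n k → EuclideanSpace ℝ (Fin k))
    (a₀ : MP n k) : Prop :=
  ∃ L, IsStarLinear L ∧ UIDcond hk Ω φ a₀ L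

/-- `φ` is uniformly intrinsic differentiable at `a₀` with intrinsic Jacobian matrix `M`. -/
def UIDAtWith (hk : k ≤ n) (Ω : Set (MP n k)) (φ : MP n k → EuclideanSpace ℝ (Fin k))
    (a₀ : MP n k) (M : Matrix (Fin k) (HorIdx n k) ℝ) : Prop :=
  UIDcond hk Ω φ a₀ (ofMatrix M)

/-- The condition expressing intrinsic differentiability of `φ` at `a₀` with intrinsic
differential `L`: `lim_{a→a₀} |φ(a) - φ(a₀) - L(a₀⁻¹ ⋆ a)| / d_φ(a,a₀) = 0`. -/
def IDcond (hk : k ≤ n) (Ω : Set (MP n k)) (φ : MP n k → EuclideanSpace ℝ (Fin k))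
    (a₀ : MP n k) (L : MP n k → EuclideanSpace ℝ (Fin k)) : Prop :=
  ∀ ε > (0 : ℝ), ∃ δ > (0 : ℝ), ∀ a ∈ Ω, ‖a - a₀‖ < δ →
    ‖φ a - φ a₀ - L (starMul (-a₀) a)‖ ≤ ε * dPhi hk φ a a₀

/-- `φ` is intrinsic differentiable at `a₀`. -/
def IDAt (hk : k ≤ n) (Ω : Set (MP n k)) (φ : MP n k → EuclideanSpace ℝ (Fin k))
    (a₀ : MP n k) : Prop :=
  ∃ L, IsStarLinear L ∧ IDcond hk Ω φ a₀ L

/-- `φ` is intrinsic differentiable at `a₀` with intrinsic Jacobian matrix `M`. -/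
def IDAtWith (hk : k ≤ n) (Ω : Set (MP n k)) (φ : MP n k → EuclideanSpace ℝ (Fin k))
    (a₀ : MP n k) (M : Matrix (Fin k) (HorIdx n k) ℝ) : Prop :=
  IDcond hk Ω φ a₀ (ofMatrix M)

/-! ### The vector fields `W_j^φ` -/

/-- The `2n-k` vector fields `W^φ` on `MP n k`:
`W_j^φ = ∂_{v_j} - (1/2) w_j ∂_τ`, `∇^{φ_i} = ∂_{η_i} + φ_i ∂_τ`,
`W^φ = ∂_{w_j} + (1/2) v_j ∂_τ`. -/
def Wfield (φ : MP n k → EuclideanSpace ℝ (Fin k)) (ℓ : HorIdx n k) (p : MP n k) : MP n k :=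
  match ℓ with
  | Sum.inl j => mkM (Pi.single j 1) 0 0 (-(1 / 2) * wPart p j)
  | Sum.inr (Sum.inl i) => mkM 0 (Pi.single i 1) 0 (φ p i)
  | Sum.inr (Sum.inr j) => mkM 0 0 (Pi.single j 1) ((1 / 2) * vPart p j)

/-- For `ψ` of class C¹ (Euclidean sense), the intrinsic Jacobian matrix
`J^ψψ(m) = [(W_ℓ^ψ ψ_i)(m)]_{i,ℓ}`. -/
def JC1 (ψ : MP n k → EuclideanSpace ℝ (Fin k)) (m : MP n k) :
    Matrix (Fin k) (HorIdx n k) ℝ :=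
  Matrix.of fun i ℓ => fderiv ℝ ψ m (Wfield ψ ℓ m) i

/-- `φ` has `∂^{φ_ℓ}`-derivative `D` at `a`: along every integral curve of `W_ℓ^φ`
through `a` the difference quotients of `φ` converge to `D`. -/
def HasWDerivAt (Ω : Set (MP n k)) (φ : MP n k → EuclideanSpace ℝ (Fin k)) (ℓ : HorIdx n k)
    (a : MP n k) (D : EuclideanSpace ℝ (Fin k)) : Prop :=
  ∀ δ > (0 : ℝ), ∀ γ : ℝ → MP n k, γ 0 = a →
    (∀ s ∈ Set.Ioo (-δ) δ, γ s ∈ Ω) →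
    (∀ s ∈ Set.Ioo (-δ) δ, HasDerivAt γ (Wfield φ ℓ (γ s)) s) →
    Tendsto (fun s : ℝ => s⁻¹ • (φ (γ s) - φ a)) (𝓝[≠] (0 : ℝ)) (𝓝 D)

/-- The little-½-Hölder condition on `Ω`. -/
def LittleHolder (Ω : Set (MP n k)) (φ : MP n k → EuclideanSpace ℝ (Fin k)) : Prop :=
  ∀ Ω' : Set (MP n k), IsOpen Ω' → IsCompact (closure Ω') → closure Ω' ⊆ Ω →
    ∀ ε > (0 : ℝ), ∃ r > (0 : ℝ), ∀ a ∈ Ω', ∀ b ∈ Ω', a ≠ b → ‖a - b‖ ≤ r →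
      ‖φ a - φ b‖ ≤ ε * Real.sqrt ‖a - b‖

/-! ### `C¹_ℍ` functions on ℍⁿ -/

/-- The horizontal vector fields `X_i`, `Y_i` of ℍⁿ. -/
def Zfield (i : Sum (Fin n) (Fin n)) (p : HP n) : HP n :=
  match i with
  | Sum.inl i => mkH (Pi.single i 1) 0 (-(1 / 2) * yPart p i)
  | Sum.inr i => mkH 0 (Pi.single i 1) ((1 / 2) * xPart p i)

/-- `f : U → ℝ^k` is of class `C¹_ℍ` with horizontal derivatives `Df`: `f` is continuous
on `U`, the `Df p i` are continuous on `U` and represent the distributional derivatives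
of `f` along the horizontal vector fields. -/
def C1H (U : Set (HP n)) (f : HP n → EuclideanSpace ℝ (Fin k))
    (Df : HP n → Sum (Fin n) (Fin n) → EuclideanSpace ℝ (Fin k)) : Prop :=
  ContinuousOn f U ∧ (∀ i, ContinuousOn (fun p => Df p i) U) ∧
    ∀ (i : Sum (Fin n) (Fin n)) (j : Fin k) (ψ : HP n → ℝ),
      ContDiff ℝ (⊤ : ℕ∞) ψ → HasCompactSupport ψ → tsupport ψ ⊆ U →
      (∫ p in U, f p j * fderiv ℝ ψ p (Zfield i p)) = -∫ p in U, Df p i j * ψ p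

/-! ### The quasi-distance ρ_φ -/

/-- The function `ρ_φ(a,b)`. -/
def rhoPhi (φ : MP n k → EuclideanSpace ℝ (Fin k)) (a b : MP n k) : ℝ :=
  max
    (Real.sqrt (∑ j, (vPart a j - vPart b j) ^ 2 + ∑ i, (etaPart a i - etaPart b i) ^ 2 +
      ∑ j, (wPart a j - wPart b j) ^ 2))
    (Real.sqrt |tauPart a - tauPart b +
      (1 / 2) * ∑ i, (φ a i + φ b i) * (etaPart b i - etaPart a i) +
      (1 / 2) * ∑ j, (vPart a j * wPart b j - vPart b j * wPart a j)|)

/-! ### Families of exponential maps -/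

/-- A family of exponential maps for `φ` near `a`, as in Definition 4.2 of the paper. -/
structure ExpFamily (Ω : Set (MP n k)) (φ : MP n k → EuclideanSpace ℝ (Fin k))
    (a : MP n k) where
  δ₁ : ℝ
  δ₂ : ℝ
  pos : 0 < δ₂
  lt : δ₂ < δ₁
  sub : closedCube δ₁ a ⊆ Ω
  E : HorIdx n k → ℝ → MP n k → MP n k
  ω : HorIdx n k → MP n k → EuclideanSpace ℝ (Fin k)
  maps : ∀ ℓ, ∀ s ∈ Set.Icc (-δ₂) δ₂, ∀ b ∈ closedCube δ₂ a, E ℓ s b ∈ closedCube δ₁ a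
  start : ∀ ℓ, ∀ b ∈ closedCube δ₂ a, E ℓ 0 b = b
  isIntegral : ∀ ℓ, ∀ b ∈ closedCube δ₂ a, ∀ s ∈ Set.Icc (-δ₂) δ₂,
    HasDerivAt (fun r => E ℓ r b) (Wfield φ ℓ (E ℓ s b)) s
  contOmega : ∀ ℓ (i : Fin k), ContinuousOn (fun b => ω ℓ b i) Ω
  chain : ∀ ℓ, ∀ b ∈ closedCube δ₂ a, ∀ s ∈ Set.Icc (-δ₂) δ₂, ∀ i : Fin k,
    φ (E ℓ s b) i - φ b i = ∫ r in (0 : ℝ)..s, ω ℓ (E ℓ r b) i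

end HeisGraph

/-! Along an integral curve of `∇^{φ_ℓ}` through `a` only `η_ℓ` and `τ` move: `η_ℓ` grows
with unit speed, so `γ(t) = a + t e_ℓ + σ(t) e_τ` and `d_φ(γ(t), a) = max{|t|, |f(t)|^{1/2}}` with
`f(t) = σ(t) - φ_ℓ(a) t`. Since `f' = φ_ℓ(γ(t)) - φ_ℓ(a)`, the hypothesis gives `|f'| ≤ C d_φ`.
If `M` is the maximum of `d_φ(γ(·), a)` on `[0, s]`, the mean value theorem yields
`|f| ≤ C M |s|` there, hence `M ≤ max{|s|, (C M |s|)^{1/2}}`, which forces `M ≤ max{1, C} |s|`. -/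

open Set Interval

theorem Convex.eq_of_hasDerivWithinAt_zero {E : Type*} [NormedAddCommGroup E] [NormedSpace ℝ E]
    {g : ℝ → E} {S : Set ℝ} (hS : Convex ℝ S) (hg : ∀ t ∈ S, HasDerivWithinAt g 0 S t)
    {x y : ℝ} (hx : x ∈ S) (hy : y ∈ S) : g y = g x := by
  have h := hS.norm_image_sub_le_of_norm_hasDerivWithin_le (C := 0) hg (fun _ _ => by simp) hx hy
  rw [zero_mul, norm_le_zero_iff, sub_eq_zero] at h
  exact h

theorem le_max_one_mul_of_le_max_sqrt {M c x : ℝ} (hc : 0 ≤ c) (hx : 0 ≤ x)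
    (h : M ≤ max x √(c * M * x)) : M ≤ max 1 c * x := by
  rw [max_mul_of_nonneg _ _ hx, one_mul]
  rcases le_max_iff.1 h with h | h
  · exact le_max_of_le_left h
  refine le_max_of_le_right ?_
  rcases le_or_gt M 0 with hM | hM
  · exact hM.trans (mul_nonneg hc hx)
  have hsq : M ^ 2 ≤ c * M * x := (Real.le_sqrt' hM).1 h
  nlinarith

theorem max_abs_sqrt_abs_le_of_abs_deriv_le {f f' : ℝ → ℝ} {C s : ℝ} (hC : 0 ≤ C)
    (hf0 : f 0 = 0) (hf : ∀ t ∈ [[0, s]], HasDerivWithinAt f (f' t) [[0, s]] t)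
    (hf' : ∀ t ∈ [[0, s]], |f' t| ≤ C * max |t| √|f t|) :
    max |s| √|f s| ≤ max 1 C * |s| := by
  set G : ℝ → ℝ := fun t => max |t| √|f t|
  have hGcont : ContinuousOn G [[0, s]] :=
    continuous_abs.continuousOn.sup (Real.continuous_sqrt.comp_continuousOn
      (continuous_abs.comp_continuousOn fun t ht => (hf t ht).continuousWithinAt))
  obtain ⟨t₀, ht₀, hmax⟩ := isCompact_uIcc.exists_isMaxOn ⟨0, left_mem_uIcc⟩ hGcont
  set M := G t₀
  have habs : ∀ t ∈ [[0, s]], |t| ≤ |s| := fun t ht => by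
    simpa using abs_sub_left_of_mem_uIcc ht
  have hf_le : ∀ t ∈ [[0, s]], |f t| ≤ C * M * |t| := fun t ht => by
    have h := (convex_uIcc 0 s).norm_image_sub_le_of_norm_hasDerivWithin_le hf
      (fun u hu => (hf' u hu).trans (mul_le_mul_of_nonneg_left (hmax hu) hC))
      left_mem_uIcc ht
    simpa [hf0] using h
  have hM : M ≤ max |s| √(C * M * |s|) :=
    max_le_max (habs t₀ ht₀) (Real.sqrt_le_sqrt ((hf_le t₀ ht₀).trans
      (mul_le_mul_of_nonneg_left (habs t₀ ht₀) (mul_nonneg hC ((abs_nonneg t₀).trans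
        (le_max_left _ _))))))
  exact (hmax right_mem_uIcc).trans (le_max_one_mul_of_le_max_sqrt hC (abs_nonneg s) hM)

theorem sum_fin_split {M : Type*} [AddCommMonoid M] {n k : ℕ} (hk : k ≤ n) (g : Fin n → M) :
    ∑ i, g i = ∑ i : Fin k, g ⟨i, lt_of_lt_of_le i.isLt hk⟩ +
      ∑ j : Fin (n - k), g ⟨j + k, by omega⟩ := by
  rw [← Equiv.sum_comp (finSumFinEquiv.trans (finCongr (Nat.add_sub_cancel' hk))) g,
    Fintype.sum_sum_type]
  congr 1
  exact Finset.sum_congr rfl fun j _ => congrArg g (Fin.ext (by simp [add_comm]))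

namespace HeisGraph

section

variable {n k : ℕ}

@[simp] lemma xPart_mkH (x y : Fin n → ℝ) (t : ℝ) : xPart (mkH x y t) = x := rfl
@[simp] lemma yPart_mkH (x y : Fin n → ℝ) (t : ℝ) : yPart (mkH x y t) = y := rfl
@[simp] lemma tPart_mkH (x y : Fin n → ℝ) (t : ℝ) : tPart (mkH x y t) = t := rfl

@[simp] lemma xPart_hInv (p : HP n) : xPart (hInv p) = -xPart p := rfl
@[simp] lemma yPart_hInv (p : HP n) : yPart (hInv p) = -yPart p := rfl
@[simp] lemma tPart_hInv (p : HP n) : tPart (hInv p) = -tPart p := rfl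

@[simp] lemma vPart_mkM (v : Fin (n - k) → ℝ) (η : Fin k → ℝ) (w : Fin (n - k) → ℝ)
    (τ : ℝ) : vPart (mkM v η w τ) = v := rfl
@[simp] lemma etaPart_mkM (v : Fin (n - k) → ℝ) (η : Fin k → ℝ) (w : Fin (n - k) → ℝ)
    (τ : ℝ) : etaPart (mkM v η w τ) = η := rfl
@[simp] lemma wPart_mkM (v : Fin (n - k) → ℝ) (η : Fin k → ℝ) (w : Fin (n - k) → ℝ)
    (τ : ℝ) : wPart (mkM v η w τ) = w := rfl
@[simp] lemma tauPart_mkM (v : Fin (n - k) → ℝ) (η : Fin k → ℝ) (w : Fin (n - k) → ℝ)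
    (τ : ℝ) : tauPart (mkM v η w τ) = τ := rfl

section graphMap

variable (φ : MP n k → EuclideanSpace ℝ (Fin k)) (c : MP n k)

@[simp] lemma xPart_graphMap_of_lt {i : ℕ} (hi : i < n) (hik : i < k) :
    xPart (graphMap φ c) ⟨i, hi⟩ = φ c ⟨i, hik⟩ := by
  simp [graphMap, hMul, iota, jmap, hik]

@[simp] lemma yPart_graphMap_of_lt {i : ℕ} (hi : i < n) (hik : i < k) :
    yPart (graphMap φ c) ⟨i, hi⟩ = etaPart c ⟨i, hik⟩ := by
  simp [graphMap, hMul, iota, jmap, hik]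

@[simp] lemma xPart_graphMap_add {j : ℕ} (hj : j + k < n) (hjk : j < n - k) :
    xPart (graphMap φ c) ⟨j + k, hj⟩ = vPart c ⟨j, hjk⟩ := by
  simp [graphMap, hMul, iota, jmap]

@[simp] lemma yPart_graphMap_add {j : ℕ} (hj : j + k < n) (hjk : j < n - k) :
    yPart (graphMap φ c) ⟨j + k, hj⟩ = wPart c ⟨j, hjk⟩ := by
  simp [graphMap, hMul, iota, jmap]

lemma tPart_graphMap (hk : k ≤ n) :
    tPart (graphMap φ c) = tauPart c - (1 / 2) * ∑ i, φ c i * etaPart c i := by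
  have hsplit := sum_fin_split hk fun i =>
    xPart (iota c) i * yPart (jmap (n := n) (φ c)) i -
      xPart (jmap (n := n) (φ c)) i * yPart (iota c) i
  simp only [graphMap, hMul, tPart_mkH, hsplit]
  simp [iota, jmap, mul_comm, ← sub_eq_add_neg]

end graphMap

lemma dPhi_eq (hk : k ≤ n) (φ : MP n k → EuclideanSpace ℝ (Fin k)) (a b : MP n k) :
    dPhi hk φ b a =
      max √(∑ j, (vPart b j - vPart a j) ^ 2 + ∑ i, (etaPart b i - etaPart a i) ^ 2 +
          ∑ j, (wPart b j - wPart a j) ^ 2)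
        √|tauPart b - tauPart a + ∑ i, φ a i * (etaPart a i - etaPart b i) +
          (1 / 2) * ∑ j, (vPart b j * wPart a j - vPart a j * wPart b j)| := by
  have hsplit := sum_fin_split hk fun i =>
    xPart (hInv (graphMap φ a)) i * yPart (graphMap φ b) i -
      xPart (graphMap φ b) i * yPart (hInv (graphMap φ a)) i
  simp only [dPhi, normM, piM, hMul, vPart_mkM, etaPart_mkM, wPart_mkM, tauPart_mkM,
    xPart_mkH, yPart_mkH, tPart_mkH, hsplit, tPart_hInv, tPart_graphMap φ _ hk]
  simp only [xPart_hInv, yPart_hInv, Pi.neg_apply, xPart_graphMap_of_lt, yPart_graphMap_of_lt,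
    xPart_graphMap_add, yPart_graphMap_add, Fin.is_lt, Fin.eta, neg_add_eq_sub]
  congr 3
  simp only [mul_sub, sub_mul, neg_mul, mul_neg, Finset.sum_sub_distrib, Finset.sum_neg_distrib]
  ring

def etaUnit (ℓ : Fin k) : MP n k := mkM 0 (Pi.single ℓ 1) 0 0

lemma Wfield_inr_inl (φ : MP n k → EuclideanSpace ℝ (Fin k)) (ℓ : Fin k) (p : MP n k) :
    Wfield φ (Sum.inr (Sum.inl ℓ)) p = etaUnit ℓ + φ p ℓ • tauUnit := by
  ext idx
  rcases idx with j | i | j | ⟨⟩ <;> simp [Wfield, etaUnit, tauUnit, mkM]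

lemma hasDerivAt_tauPart {γ : ℝ → MP n k} {v : MP n k} {t : ℝ} (h : HasDerivAt γ v t) :
    HasDerivAt (fun u => tauPart (γ u)) (tauPart v) t :=
  (EuclideanSpace.proj (𝕜 := ℝ) (Sum.inr (Sum.inr (Sum.inr ())) : MIdxT n k)).hasFDerivAt
    |>.comp_hasDerivAt t h

lemma eq_add_smul_etaUnit_of_hasDerivAt_Wfield {φ : MP n k → EuclideanSpace ℝ (Fin k)}
    {ℓ : Fin k} {γ : ℝ → MP n k} {S : Set ℝ} (hS : Convex ℝ S) (h0 : 0 ∈ S)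
    (hγ : ∀ t ∈ S, HasDerivAt γ (Wfield φ (Sum.inr (Sum.inl ℓ)) (γ t)) t) {t : ℝ} (ht : t ∈ S) :
    γ t = γ 0 + t • etaUnit ℓ + (tauPart (γ t) - tauPart (γ 0)) • tauUnit := by
  have hconst := hS.eq_of_hasDerivWithinAt_zero
    (g := fun u => γ u - u • etaUnit ℓ - tauPart (γ u) • tauUnit) (fun u hu => by
      have h := ((hγ u hu).sub ((hasDerivAt_id u).smul_const (etaUnit ℓ))).sub
        ((hasDerivAt_tauPart (hγ u hu)).smul_const tauUnit)
      refine h.hasDerivWithinAt.congr_deriv ?_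
      rw [Wfield_inr_inl]
      ext idx
      rcases idx with j | i | j | ⟨⟩ <;> simp [tauPart, etaUnit, tauUnit, mkM]) h0 ht
  simp only [zero_smul, sub_zero] at hconst
  linear_combination (norm := module) hconst

lemma dPhi_add_smul_etaUnit_add_smul_tauUnit (hk : k ≤ n)
    (φ : MP n k → EuclideanSpace ℝ (Fin k)) (a : MP n k) (ℓ : Fin k) (s σ : ℝ) :
    dPhi hk φ (a + s • etaUnit ℓ + σ • tauUnit) a = max |s| √|σ - φ a ℓ * s| := by
  rw [dPhi_eq]
  simp [vPart, etaPart, wPart, tauPart, etaUnit, tauUnit, mkM, Pi.single_apply,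
    Real.sqrt_sq_eq_abs, ← sub_eq_add_neg]

end

theorem statement18_general (n k : ℕ) (hk : k ≤ n)
    (Ω : Set (MP n k))
    (φ : MP n k → EuclideanSpace ℝ (Fin k))
    (a : MP n k)
    (C r : ℝ) (hC : 0 < C)
    (hbound : ∀ m ∈ Ω, dInf (iota m) (iota a) < r → ‖φ m - φ a‖ ≤ C * dPhi hk φ m a)
    (ℓ : Fin k) (δ : ℝ) (γ : ℝ → MP n k) (hγ0 : γ 0 = a)
    (hγΩ : ∀ s ∈ Set.Icc (-δ) δ, γ s ∈ Ω)
    (hγd : ∀ s ∈ Set.Icc (-δ) δ,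
      HasDerivAt γ (Wfield φ (Sum.inr (Sum.inl ℓ)) (γ s)) s)
    (hsmall : ∀ s ∈ Set.Icc (-δ) δ, dInf (iota (γ s)) (iota a) < r) :
    ∀ s ∈ Set.Icc (-δ) δ, dPhi hk φ (γ s) a ≤ max 1 C * |s| := by
  intro s hs
  have hJ : [[0, s]] ⊆ Icc (-δ) δ :=
    uIcc_subset_Icc ⟨by linarith [hs.1, hs.2], by linarith [hs.1, hs.2]⟩ hs
  set f : ℝ → ℝ := fun t => tauPart (γ t) - tauPart a - φ a ℓ * t
  have hdist : ∀ t ∈ Icc (-δ) δ, dPhi hk φ (γ t) a = max |t| √|f t| := fun t ht => by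
    rw [eq_add_smul_etaUnit_of_hasDerivAt_Wfield (convex_Icc _ _) (hJ left_mem_uIcc) hγd ht,
      hγ0, dPhi_add_smul_etaUnit_add_smul_tauUnit]
  have hderiv : ∀ t ∈ Icc (-δ) δ, HasDerivAt f (φ (γ t) ℓ - φ a ℓ) t := fun t ht => by
    have h := ((hasDerivAt_tauPart (hγd t ht)).sub_const (tauPart a)).sub
      ((hasDerivAt_id t).const_mul (φ a ℓ))
    refine h.congr_deriv ?_
    simp [Wfield_inr_inl, etaUnit, tauUnit, mkM, tauPart]
  rw [hdist s hs]
  refine max_abs_sqrt_abs_le_of_abs_deriv_le hC.le (by simp [f, hγ0])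
    (fun t ht => (hderiv t (hJ ht)).hasDerivWithinAt) fun t ht => ?_
  calc |φ (γ t) ℓ - φ a ℓ| ≤ ‖φ (γ t) - φ a‖ := PiLp.norm_apply_le (φ (γ t) - φ a) ℓ
    _ ≤ C * dPhi hk φ (γ t) a := hbound _ (hγΩ t (hJ ht)) (hsmall t (hJ ht))
    _ = C * max |t| √|f t| := by rw [hdist t (hJ ht)]

/-- estimate (4.9) in the proof of Proposition 4.10: if
`|φ(m) - φ(a)| ≤ C·d_φ(m,a)` for `m` in a `d_∞`-ball around `a`, and `γ` is any
integral curve of `∇^{φ_ℓ}` with `γ(0) = a` staying in that ball, then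
`d_φ(γ(s), a) ≤ max{1,C}·|s|`. -/
theorem statement18 (n k : ℕ) (hn : 1 ≤ n) (hk1 : 1 ≤ k) (hk : k ≤ n)
    (Ω : Set (MP n k)) (hΩ : IsOpen Ω)
    (φ : MP n k → EuclideanSpace ℝ (Fin k)) (hφ : ContinuousOn φ Ω)
    (a : MP n k) (ha : a ∈ Ω)
    (C r : ℝ) (hC : 0 < C) (hr : 0 < r)
    (hbound : ∀ m ∈ Ω, dInf (iota m) (iota a) < r → ‖φ m - φ a‖ ≤ C * dPhi hk φ m a)
    (ℓ : Fin k) (δ : ℝ) (hδ : 0 < δ) (γ : ℝ → MP n k) (hγ0 : γ 0 = a)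
    (hγΩ : ∀ s ∈ Set.Icc (-δ) δ, γ s ∈ Ω)
    (hγd : ∀ s ∈ Set.Icc (-δ) δ,
      HasDerivAt γ (Wfield φ (Sum.inr (Sum.inl ℓ)) (γ s)) s)
    (hsmall : ∀ s ∈ Set.Icc (-δ) δ, dInf (iota (γ s)) (iota a) < r) :
    ∀ s ∈ Set.Icc (-δ) δ, dPhi hk φ (γ s) a ≤ max 1 C * |s| :=
  statement18_general n k hk Ω φ a C r hC hbound ℓ δ γ hγ0 hγΩ hγd hsmall

end HeisGraph
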